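/- arXiv:2307.03820 — 2 statements merged into one kernel-verified Lean document; each statement's English description precedes it below -/
import Mathlib

section
/- Suppose f is C³ on a neighbourhood of x(0), x is three times differentiable at 0 along the pathway, the natural pathway equation f(x(t)) = (1−t) • f(x(0)) holds for all t ∈ [0,1], and J := f′(x(0)) is a continuous linear isomorphism from E onto F. Fix ε ∈ ℝ and define c_n := (εⁿ/n!) • x⁽ⁿ⁾(0). Then f⁽³⁾(x(0))[c₁,c₁,c₁] + 6 • f″(x(0))[c₁,c₂] + 6 • J(c₃) = 0, and hence c₃ = −(1/6) • J⁻¹( f⁽³⁾(x(0))[c₁,c₁,c₁] + 6 • f″(x(0))[c₁,c₂] ). -/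
/-! Along the pathway `g t := f (x t)` is affine in `t`, so `g''` vanishes near `0` and hence
`g'''(0) = 0`. Expanding `g'''` by the chain rule, with the symmetry of `f″` merging the mixed
terms, gives `f'''[x',x',x'] + 3 f''[x',x''] + f'[x'''] = 0` at `0`; multiplying by `ε³` is the
identity, and applying `J⁻¹` solves it for `c₃`. -/

open Topology Filter Set

theorem iteratedFDeriv_three_apply {𝕜 E F : Type*} [NontriviallyNormedField 𝕜]
    [NormedAddCommGroup E] [NormedSpace 𝕜 E] [NormedAddCommGroup F] [NormedSpace 𝕜 F]
    (f : E → F) (z : E) (m : Fin 3 → E) :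
    iteratedFDeriv 𝕜 3 f z m = fderiv 𝕜 (fderiv 𝕜 (fderiv 𝕜 f)) z (m 0) (m 1) (m 2) := by
  rw [iteratedFDeriv_succ_apply_right, iteratedFDeriv_two_apply]
  rfl

theorem ContDiffAt.eventually_hasFDerivAt {𝕜 E F : Type*} [NontriviallyNormedField 𝕜]
    [NormedAddCommGroup E] [NormedSpace 𝕜 E] [NormedAddCommGroup F] [NormedSpace 𝕜 F]
    {f : E → F} {p : E} {n : ℕ} (hf : ContDiffAt 𝕜 (n + 1) f p) :
    ∀ᶠ q in 𝓝 p, HasFDerivAt f (fderiv 𝕜 f q) q :=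
  (hf.eventually (by simp)).mono fun _ hq => (hq.differentiableAt (by simp)).hasFDerivAt

section ZeroDerivative

variable {𝕜 F : Type*} [NontriviallyNormedField 𝕜] [NormedAddCommGroup F] [NormedSpace 𝕜 F]
  {φ : 𝕜 → F} {s : Set 𝕜}

theorem HasDerivWithinAt.eq_zero_of_eventuallyEq_zero {φ' : F} {t : 𝕜}
    (hφ : HasDerivWithinAt φ φ' s t) (hs : UniqueDiffWithinAt 𝕜 s t) (ht : t ∈ s)
    (h : φ =ᶠ[𝓝[s] t] 0) : φ' = 0 :=
  hs.eq_deriv _ hφ <| (hasDerivWithinAt_const t s 0).congr_of_eventuallyEq h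
    (h.self_of_nhdsWithin ht)

theorem Filter.EventuallyEq.eventuallyEq_zero_of_hasDerivWithinAt {φ' : 𝕜 → F} {t₀ : 𝕜}
    (h : φ =ᶠ[𝓝[s] t₀] 0) (hs : UniqueDiffOn 𝕜 s)
    (hφ : ∀ᶠ t in 𝓝[s] t₀, HasDerivWithinAt φ (φ' t) s t) : φ' =ᶠ[𝓝[s] t₀] 0 := by
  filter_upwards [eventually_eventually_nhdsWithin.2 h, hφ, self_mem_nhdsWithin]
    with t ht hφt hts
  exact hφt.eq_zero_of_eventuallyEq_zero (hs t hts) hts ht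

end ZeroDerivative

theorem DifferentiableWithinAt.hasDerivWithinAt_iteratedDerivWithin {𝕜 E : Type*}
    [NontriviallyNormedField 𝕜] [NormedAddCommGroup E] [NormedSpace 𝕜 E] {x : 𝕜 → E}
    {s : Set 𝕜} {t : 𝕜} {n : ℕ} (h : DifferentiableWithinAt 𝕜 (iteratedDerivWithin n x s) s t) :
    HasDerivWithinAt (iteratedDerivWithin n x s) (iteratedDerivWithin (n + 1) x s t) s t := by
  rw [iteratedDerivWithin_succ]
  exact h.hasDerivWithinAt

theorem HasFDerivAt.hasDerivWithinAt_comp_apply {𝕜 E F G : Type*} [NontriviallyNormedField 𝕜]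
    [NormedAddCommGroup E] [NormedSpace 𝕜 E] [NormedAddCommGroup F] [NormedSpace 𝕜 F]
    [NormedAddCommGroup G] [NormedSpace 𝕜 G] {L : E → F →L[𝕜] G} {L' : E →L[𝕜] F →L[𝕜] G}
    {x : 𝕜 → E} {y : 𝕜 → F} {s : Set 𝕜} {t : 𝕜} {v : E} {w : F} (hL : HasFDerivAt L L' (x t))
    (hx : HasDerivWithinAt x v s t) (hy : HasDerivWithinAt y w s t) :
    HasDerivWithinAt (fun u => L (x u) (y u)) (L' v (y t) + L (x t) w) s t :=
  (hL.comp_hasDerivWithinAt t hx).clm_apply hy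

section Curve

variable {E F : Type*} [NormedAddCommGroup E] [NormedSpace ℝ E] [NormedAddCommGroup F]
  [NormedSpace ℝ F] {f : E → F} {x x₁ x₂ : ℝ → E} {s : Set ℝ} {t₀ : ℝ}

theorem eventually_secondDeriv_comp_eq_zero_of_affine (hf : ContDiffAt ℝ 2 f (x t₀))
    (hs : UniqueDiffOn ℝ s) (ht₀ : t₀ ∈ s) {p q : F}
    (haff : ∀ᶠ t in 𝓝[s] t₀, f (x t) = p + t • q)
    (hx : ∀ᶠ t in 𝓝[s] t₀, HasDerivWithinAt x (x₁ t) s t)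
    (hx₁ : ∀ᶠ t in 𝓝[s] t₀, HasDerivWithinAt x₁ (x₂ t) s t) :
    ∀ᶠ t in 𝓝[s] t₀,
      fderiv ℝ (fderiv ℝ f) (x t) (x₁ t) (x₁ t) + fderiv ℝ f (x t) (x₂ t) = 0 := by
  have hxt₀ : Tendsto x (𝓝[s] t₀) (𝓝 (x t₀)) :=
    (hx.self_of_nhdsWithin ht₀).continuousWithinAt
  have hDf : ∀ᶠ t in 𝓝[s] t₀, HasFDerivAt f (fderiv ℝ f (x t)) (x t) :=
    hxt₀.eventually hf.eventually_hasFDerivAt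
  have hD2f :
      ∀ᶠ t in 𝓝[s] t₀, HasFDerivAt (fderiv ℝ f) (fderiv ℝ (fderiv ℝ f) (x t)) (x t) :=
    hxt₀.eventually (hf.fderiv_right (m := 1) le_rfl).eventually_hasFDerivAt
  have hfirst : (fun t => fderiv ℝ f (x t) (x₁ t) - q) =ᶠ[𝓝[s] t₀] 0 := by
    refine EventuallyEq.eventuallyEq_zero_of_hasDerivWithinAt
      (φ := fun t => f (x t) - (p + t • q)) ?_ hs ?_
    · filter_upwards [haff] with t ht
      simp [ht]
    · filter_upwards [hDf, hx] with t hDft hxt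
      simpa [Function.comp_def, Pi.sub_def] using (hDft.comp_hasDerivWithinAt t hxt).sub
        (((hasDerivAt_id t).smul_const q).const_add p).hasDerivWithinAt
  refine hfirst.eventuallyEq_zero_of_hasDerivWithinAt hs ?_
  filter_upwards [hD2f, hx, hx₁] with t hD2ft hxt hx₁t
  simpa using (hD2ft.hasDerivWithinAt_comp_apply hxt hx₁t).sub_const q

theorem hasDerivWithinAt_secondDeriv_comp (hf : ContDiffAt ℝ 3 f (x t₀)) {v : E}
    (hx : HasDerivWithinAt x (x₁ t₀) s t₀) (hx₁ : HasDerivWithinAt x₁ (x₂ t₀) s t₀)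
    (hx₂ : HasDerivWithinAt x₂ v s t₀) :
    HasDerivWithinAt
      (fun t => fderiv ℝ (fderiv ℝ f) (x t) (x₁ t) (x₁ t) + fderiv ℝ f (x t) (x₂ t))
      (iteratedFDeriv ℝ 3 f (x t₀) ![x₁ t₀, x₁ t₀, x₁ t₀]
        + (3 : ℝ) • iteratedFDeriv ℝ 2 f (x t₀) ![x₁ t₀, x₂ t₀] + fderiv ℝ f (x t₀) v) s t₀ := by
  have hf' : ContDiffAt ℝ 2 (fderiv ℝ f) (x t₀) := hf.fderiv_right (by norm_num)
  have hD2 : HasFDerivAt (fderiv ℝ f) (fderiv ℝ (fderiv ℝ f) (x t₀)) (x t₀) :=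
    (hf'.differentiableAt (by norm_num)).hasFDerivAt
  have hD3 :
      HasFDerivAt (fderiv ℝ (fderiv ℝ f)) (fderiv ℝ (fderiv ℝ (fderiv ℝ f)) (x t₀)) (x t₀) :=
    ((hf'.fderiv_right (m := 1) le_rfl).differentiableAt (by norm_num)).hasFDerivAt
  have hsymm := hf.isSymmSndFDerivAt (by rw [minSmoothness_of_isRCLikeNormedField]; norm_num)
  refine (((hD3.hasDerivWithinAt_comp_apply hx hx₁).clm_apply hx₁).add
    (hD2.hasDerivWithinAt_comp_apply hx hx₂)).congr_deriv ?_
  simp only [iteratedFDeriv_three_apply, iteratedFDeriv_two_apply, Matrix.cons_val_zero,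
    Matrix.cons_val_one, Matrix.cons_val_two, Matrix.head_cons, Matrix.tail_cons,
    add_apply, hsymm.eq (x₂ t₀)]
  module

theorem thirdDeriv_comp_eq_zero_of_affine (hf : ContDiffAt ℝ 3 f (x t₀))
    (hs : UniqueDiffOn ℝ s) (ht₀ : t₀ ∈ s) {p q : F} {v : E}
    (haff : ∀ᶠ t in 𝓝[s] t₀, f (x t) = p + t • q)
    (hx : ∀ᶠ t in 𝓝[s] t₀, HasDerivWithinAt x (x₁ t) s t)
    (hx₁ : ∀ᶠ t in 𝓝[s] t₀, HasDerivWithinAt x₁ (x₂ t) s t)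
    (hx₂ : HasDerivWithinAt x₂ v s t₀) :
    iteratedFDeriv ℝ 3 f (x t₀) ![x₁ t₀, x₁ t₀, x₁ t₀]
      + (3 : ℝ) • iteratedFDeriv ℝ 2 f (x t₀) ![x₁ t₀, x₂ t₀] + fderiv ℝ f (x t₀) v = 0 :=
  (hasDerivWithinAt_secondDeriv_comp hf (hx.self_of_nhdsWithin ht₀)
    (hx₁.self_of_nhdsWithin ht₀) hx₂).eq_zero_of_eventuallyEq_zero (hs t₀ ht₀) ht₀
    (eventually_secondDeriv_comp_eq_zero_of_affine (hf.of_le (by norm_num)) hs ht₀ haff hx hx₁)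

end Curve

theorem correction_third_order_general
    {E F : Type*} [NormedAddCommGroup E] [NormedSpace ℝ E]
    [NormedAddCommGroup F] [NormedSpace ℝ F]
    (f : E → F) (x : ℝ → E)
    (hf : ContDiffAt ℝ 3 f (x 0))
    (hx1 : ∀ᶠ s in 𝓝[≥] (0 : ℝ), DifferentiableWithinAt ℝ x (Set.Ici 0) s)
    (hx2 : ∀ᶠ s in 𝓝[≥] (0 : ℝ),
      DifferentiableWithinAt ℝ (iteratedDerivWithin 1 x (Set.Ici 0)) (Set.Ici 0) s)
    (hx3 : DifferentiableWithinAt ℝ (iteratedDerivWithin 2 x (Set.Ici 0)) (Set.Ici 0) 0)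
    (hpath : ∀ t ∈ Set.Icc (0 : ℝ) 1, f (x t) = (1 - t) • f (x 0))
    (J : E ≃L[ℝ] F) (hJ : (J : E →L[ℝ] F) = fderiv ℝ f (x 0))
    (ε : ℝ) (c₁ c₂ c₃ : E)
    (hc₁ : c₁ = ε • derivWithin x (Set.Ici 0) 0)
    (hc₂ : c₂ = (ε ^ 2 / 2) • iteratedDerivWithin 2 x (Set.Ici 0) 0)
    (hc₃ : c₃ = (ε ^ 3 / 6) • iteratedDerivWithin 3 x (Set.Ici 0) 0) :
    iteratedFDeriv ℝ 3 f (x 0) ![c₁, c₁, c₁]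
      + (6 : ℝ) • iteratedFDeriv ℝ 2 f (x 0) ![c₁, c₂] + (6 : ℝ) • J c₃ = 0 ∧
    c₃ = -(1 / 6 : ℝ) • J.symm (iteratedFDeriv ℝ 3 f (x 0) ![c₁, c₁, c₁]
      + (6 : ℝ) • iteratedFDeriv ℝ 2 f (x 0) ![c₁, c₂]) := by
  have haff : ∀ᶠ t in 𝓝[≥] (0 : ℝ), f (x t) = f (x 0) + t • -f (x 0) := by
    filter_upwards [Ico_mem_nhdsGE one_pos] with t ht
    rw [hpath t (Ico_subset_Icc_self ht)]
    module
  have hx :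
      ∀ᶠ t in 𝓝[≥] (0 : ℝ), HasDerivWithinAt x (iteratedDerivWithin 1 x (Ici 0) t) (Ici 0) t :=
    hx1.mono fun _ h => by simpa using h.hasDerivWithinAt
  have key := thirdDeriv_comp_eq_zero_of_affine hf (uniqueDiffOn_Ici 0) self_mem_Ici haff hx
    (hx2.mono fun _ h => h.hasDerivWithinAt_iteratedDerivWithin)
    hx3.hasDerivWithinAt_iteratedDerivWithin
  have hmain : iteratedFDeriv ℝ 3 f (x 0) ![c₁, c₁, c₁]
      + (6 : ℝ) • iteratedFDeriv ℝ 2 f (x 0) ![c₁, c₂] + (6 : ℝ) • J c₃ = 0 := by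
    simp only [iteratedDerivWithin_one, iteratedFDeriv_three_apply, iteratedFDeriv_two_apply,
      Matrix.cons_val_zero, Matrix.cons_val_one, Matrix.cons_val_two, Matrix.head_cons,
      Matrix.tail_cons] at key ⊢
    rw [← ContinuousLinearEquiv.coe_coe, hJ, hc₁, hc₂, hc₃]
    simp only [map_smul, smul_apply]
    linear_combination (norm := module) ε ^ 3 • key
  refine ⟨hmain, ?_⟩
  rw [eq_neg_of_add_eq_zero_left hmain]
  simp [smul_smul]

/-- Finite-step correction identity at third order: with
`c_n := (εⁿ/n!) • x⁽ⁿ⁾(0)` (derivatives taken along the pathway),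
`f⁽³⁾(x 0)[c₁,c₁,c₁] + 6 • f″(x 0)[c₁,c₂] + 6 • J c₃ = 0`, hence
`c₃ = -(1/6) • J⁻¹ (f⁽³⁾(x 0)[c₁,c₁,c₁] + 6 • f″(x 0)[c₁,c₂])`. -/
theorem correction_third_order
    {E F : Type*} [NormedAddCommGroup E] [NormedSpace ℝ E] [CompleteSpace E]
    [NormedAddCommGroup F] [NormedSpace ℝ F] [CompleteSpace F]
    (f : E → F) (x : ℝ → E)
    (hf : ContDiffAt ℝ 3 f (x 0))
    (hx1 : ∀ᶠ s in 𝓝[≥] (0 : ℝ), DifferentiableWithinAt ℝ x (Set.Ici 0) s)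
    (hx2 : ∀ᶠ s in 𝓝[≥] (0 : ℝ),
      DifferentiableWithinAt ℝ (iteratedDerivWithin 1 x (Set.Ici 0)) (Set.Ici 0) s)
    (hx3 : DifferentiableWithinAt ℝ (iteratedDerivWithin 2 x (Set.Ici 0)) (Set.Ici 0) 0)
    (hpath : ∀ t ∈ Set.Icc (0 : ℝ) 1, f (x t) = (1 - t) • f (x 0))
    (J : E ≃L[ℝ] F) (hJ : (J : E →L[ℝ] F) = fderiv ℝ f (x 0))
    (ε : ℝ) (c₁ c₂ c₃ : E)
    (hc₁ : c₁ = ε • derivWithin x (Set.Ici 0) 0)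
    (hc₂ : c₂ = (ε ^ 2 / 2) • iteratedDerivWithin 2 x (Set.Ici 0) 0)
    (hc₃ : c₃ = (ε ^ 3 / 6) • iteratedDerivWithin 3 x (Set.Ici 0) 0) :
    iteratedFDeriv ℝ 3 f (x 0) ![c₁, c₁, c₁]
      + (6 : ℝ) • iteratedFDeriv ℝ 2 f (x 0) ![c₁, c₂] + (6 : ℝ) • J c₃ = 0 ∧
    c₃ = -(1 / 6 : ℝ) • J.symm (iteratedFDeriv ℝ 3 f (x 0) ![c₁, c₁, c₁]
      + (6 : ℝ) • iteratedFDeriv ℝ 2 f (x 0) ![c₁, c₂]) :=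
  correction_third_order_general f x hf hx1 hx2 hx3 hpath J hJ ε c₁ c₂ c₃ hc₁ hc₂ hc₃
end

section
/- Let f be C⁵ on a neighbourhood of x₀ and fix v ∈ E. Define the nonlinear part f_nl(a) := f(x₀ + a) − f(x₀) − f′(x₀)(a). Then the four-point stencil for the fourth directional derivative is fifth-order accurate: the function ε ↦ 192 • f_nl((ε/2)•v) − 96 • f_nl(ε•v) + (64/3) • f_nl((3ε/2)•v) − ε⁴ • f⁽⁴⁾(x₀)[v,v,v,v] is O(ε⁵) as ε → 0. -/
/-!
Along the line `g t = f (x₀ + t • v)`, which is `C⁵` at `0` with `g⁽ᵏ⁾ 0 = f⁽ᵏ⁾ x₀ [v, …, v]`,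
the Peano form of Taylor's theorem writes `f_nl (t • v)` as `∑_{k=2}^{5} tᵏ/k! • g⁽ᵏ⁾ 0 + O(t⁵)`.
The stencil is linear, preserves `O(ε⁵)` (its nodes are fixed multiples of `ε`), kills `t²` and
`t³`, and sends `t⁴/24` to `ε⁴`; the `t⁵` term only contributes `O(ε⁵)`.
-/

open Topology Asymptotics Filter

theorem ContinuousLinearMap.iteratedFDeriv_comp_right_of_contDiffAt
    {𝕜 E F G : Type*} [NontriviallyNormedField 𝕜]
    [NormedAddCommGroup E] [NormedSpace 𝕜 E] [NormedAddCommGroup F] [NormedSpace 𝕜 F]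
    [NormedAddCommGroup G] [NormedSpace 𝕜 G]
    (g : G →L[𝕜] E) {f : E → F} {x : G} {i : ℕ} (hf : ContDiffAt 𝕜 i f (g x)) :
    iteratedFDeriv 𝕜 i (f ∘ g) x =
      (iteratedFDeriv 𝕜 i f (g x)).compContinuousLinearMap fun _ => g := by
  obtain ⟨u, hu, hfu⟩ := hf.contDiffOn le_rfl (by simp)
  obtain ⟨U, hUu, hU, hxU⟩ := mem_nhds_iff.1 hu
  have hgU : IsOpen (g ⁻¹' U) := hU.preimage g.continuous
  rw [← iteratedFDerivWithin_of_isOpen i hgU hxU, ← iteratedFDerivWithin_of_isOpen i hU hxU,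
    g.iteratedFDerivWithin_comp_right (hfu.mono hUu) hU.uniqueDiffOn hgU.uniqueDiffOn hxU le_rfl]

theorem ContDiffAt.iteratedDeriv_comp_add_smul
    {𝕜 E F : Type*} [NontriviallyNormedField 𝕜]
    [NormedAddCommGroup E] [NormedSpace 𝕜 E] [NormedAddCommGroup F] [NormedSpace 𝕜 F]
    {f : E → F} {x : E} (v : E) {i : ℕ} (hf : ContDiffAt 𝕜 i f x) :
    iteratedDeriv i (fun t : 𝕜 => f (x + t • v)) 0 = iteratedFDeriv 𝕜 i f x fun _ => v := by
  have hshift :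
      ContDiffAt 𝕜 i (fun z => f (x + z)) (ContinuousLinearMap.toSpanSingleton 𝕜 v 0) := by
    have hf0 : ContDiffAt 𝕜 i f (x + 0) := by rwa [add_zero]
    rw [map_zero]
    exact hf0.comp (0 : E) (contDiffAt_const.add contDiffAt_id)
  have := (ContinuousLinearMap.toSpanSingleton 𝕜 v).iteratedFDeriv_comp_right_of_contDiffAt hshift
  rw [iteratedDeriv_eq_iteratedFDeriv]
  simpa [Function.comp_def, iteratedFDeriv_comp_add_left] using congrArg (· fun _ => 1) this

theorem ContDiffAt.isLittleO_sub_taylor {F : Type*} [NormedAddCommGroup F] [NormedSpace ℝ F]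
    {g : ℝ → F} {a : ℝ} {n : ℕ} (hg : ContDiffAt ℝ n g a) :
    (fun x => g x - ∑ k ∈ Finset.range (n + 1), ((k.factorial : ℝ)⁻¹ * (x - a) ^ k) •
        iteratedDeriv k g a) =o[𝓝 a] fun x => (x - a) ^ n := by
  obtain ⟨u, hu, hgu⟩ := hg.contDiffOn le_rfl (by simp)
  obtain ⟨r, hr, hru⟩ := Metric.mem_nhds_iff.1 hu
  have hball : Metric.ball a r ∈ 𝓝 a := Metric.ball_mem_nhds a hr
  have := taylor_isLittleO (convex_ball a r) (Metric.mem_ball_self hr) (hgu.mono hru)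
  rw [nhdsWithin_eq_nhds.2 hball] at this
  refine this.congr_left fun x => ?_
  rw [taylor_within_apply]
  congr 2 with k
  rw [iteratedDerivWithin_of_isOpen Metric.isOpen_ball (Metric.mem_ball_self hr)]

/-- The weights `w = (192, -96, 64/3)` at the nodes `h = (1/2, 1, 3/2)` solve the moment equations
`∑ w h² = ∑ w h³ = 0`, `∑ w h⁴ = 4! = 24`. -/
noncomputable def fourthDerivStencil {F : Type*} [AddCommGroup F] [Module ℝ F] (φ : ℝ → F)
    (ε : ℝ) : F :=
  (192 : ℝ) • φ (ε / 2) - (96 : ℝ) • φ ε + (64 / 3 : ℝ) • φ (3 * ε / 2)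

section Stencil

variable {F : Type*}

theorem fourthDerivStencil_add [AddCommGroup F] [Module ℝ F] (φ ψ : ℝ → F) (ε : ℝ) :
    fourthDerivStencil (φ + ψ) ε = fourthDerivStencil φ ε + fourthDerivStencil ψ ε := by
  simp only [fourthDerivStencil, Pi.add_apply]
  module

theorem fourthDerivStencil_quintic [AddCommGroup F] [Module ℝ F] (a b c d : F) (ε : ℝ) :
    fourthDerivStencil
        (fun t => (t ^ 2 / 2) • a + (t ^ 3 / 6) • b + (t ^ 4 / 24) • c + (t ^ 5 / 120) • d) ε =
      ε ^ 4 • c + (3 / 5 * ε ^ 5) • d := by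
  simp only [fourthDerivStencil]
  module

theorem Asymptotics.IsBigO.comp_const_mul_pow [NormedAddCommGroup F] {R : ℝ → F} {n : ℕ}
    (hR : R =O[𝓝 0] fun t => t ^ n) (c : ℝ) :
    (fun ε => R (c * ε)) =O[𝓝 0] fun ε => ε ^ n := by
  have hc : Tendsto (fun ε : ℝ => c * ε) (𝓝 0) (𝓝 0) := by
    simpa using (continuous_const_mul c).tendsto 0
  refine (hR.comp_tendsto hc).trans ?_
  simp only [Function.comp_def, mul_pow]
  exact (isBigO_refl (fun ε : ℝ => ε ^ n) (𝓝 0)).const_mul_left (c ^ n)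

theorem fourthDerivStencil_isBigO [NormedAddCommGroup F] [NormedSpace ℝ F] {R : ℝ → F} {n : ℕ}
    (hR : R =O[𝓝 0] fun t => t ^ n) :
    fourthDerivStencil R =O[𝓝 0] fun ε => ε ^ n := by
  have h := (((hR.comp_const_mul_pow (1 / 2)).const_smul_left (192 : ℝ)).sub
    (hR.const_smul_left (96 : ℝ))).add
      ((hR.comp_const_mul_pow (3 / 2)).const_smul_left (64 / 3 : ℝ))
  refine h.congr_left fun ε => ?_
  simp only [fourthDerivStencil, Pi.smul_apply]
  ring_nf

end Stencil

theorem fourth_directional_derivative_stencil_order5_general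
    {E F : Type*} [NormedAddCommGroup E] [NormedSpace ℝ E]
    [NormedAddCommGroup F] [NormedSpace ℝ F]
    (f : E → F) (x₀ v : E)
    (hf : ContDiffAt ℝ 5 f x₀)
    (fnl : E → F) (hfnl : ∀ a, fnl a = f (x₀ + a) - f x₀ - fderiv ℝ f x₀ a) :
    (fun ε : ℝ =>
        (192 : ℝ) • fnl ((ε / 2) • v) - (96 : ℝ) • fnl (ε • v)
          + (64 / 3 : ℝ) • fnl ((3 * ε / 2) • v)
          - ε ^ 4 • iteratedFDeriv ℝ 4 f x₀ ![v, v, v, v])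
      =O[𝓝 (0 : ℝ)] fun ε => ε ^ 5 := by
  set g : ℝ → F := fun t => f (x₀ + t • v)
  have hg : ContDiffAt ℝ (5 : ℕ) g 0 := by
    have hf0 : ContDiffAt ℝ 5 f (x₀ + (0 : ℝ) • v) := by rwa [zero_smul, add_zero]
    exact hf0.comp (0 : ℝ) (contDiffAt_const.add (contDiffAt_id.smul contDiffAt_const))
  have hD1 : iteratedDeriv 1 g 0 = fderiv ℝ f x₀ v := by
    rw [(hf.of_le (by norm_num)).iteratedDeriv_comp_add_smul, iteratedFDeriv_one_apply]
  have hD4 : iteratedDeriv 4 g 0 = iteratedFDeriv ℝ 4 f x₀ ![v, v, v, v] := by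
    rw [(hf.of_le (by norm_num)).iteratedDeriv_comp_add_smul]
    congr 1
    ext i
    fin_cases i <;> rfl
  set R : ℝ → F := fun t => g t - ∑ k ∈ Finset.range 6, ((k.factorial : ℝ)⁻¹ * t ^ k) •
    iteratedDeriv k g 0
  have hR : R =O[𝓝 0] fun t => t ^ 5 := by simpa [R] using hg.isLittleO_sub_taylor.isBigO
  have hfnl_line : (fun t : ℝ => fnl (t • v)) = R + fun t =>
      (t ^ 2 / 2) • iteratedDeriv 2 g 0 + (t ^ 3 / 6) • iteratedDeriv 3 g 0 +
        (t ^ 4 / 24) • iteratedDeriv 4 g 0 + (t ^ 5 / 120) • iteratedDeriv 5 g 0 := by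
    ext t
    rw [Pi.add_apply, hfnl, map_smul, ← hD1]
    simp only [R, g, Finset.sum_range_succ, Finset.sum_range_zero, iteratedDeriv_zero, zero_smul,
      add_zero]
    norm_num [Nat.factorial]
    module
  have hstencil : ∀ ε : ℝ, fourthDerivStencil (fun t : ℝ => fnl (t • v)) ε
      - ε ^ 4 • iteratedFDeriv ℝ 4 f x₀ ![v, v, v, v]
      = fourthDerivStencil R ε + (3 / 5 * ε ^ 5) • iteratedDeriv 5 g 0 := by
    intro ε
    rw [hfnl_line, fourthDerivStencil_add, fourthDerivStencil_quintic, hD4]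
    abel
  have hquintic : (fun ε : ℝ => (3 / 5 * ε ^ 5) • iteratedDeriv 5 g 0) =O[𝓝 0] fun ε => ε ^ 5 :=
    isBigO_of_le' (c := 3 / 5 * ‖iteratedDeriv 5 g 0‖) _ fun ε => by
      rw [norm_smul, norm_mul, mul_right_comm]
      norm_num
  exact ((fourthDerivStencil_isBigO hR).add hquintic).congr_left fun ε => (hstencil ε).symm

/-- Fourth-order-accurate stencil for the fourth directional derivative:
`192 • f_nl((ε/2)•v) - 96 • f_nl(ε•v) + (64/3) • f_nl((3ε/2)•v)
  = ε⁴ • f⁽⁴⁾(x₀)[v,v,v,v] + O(ε⁵)`. -/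
theorem fourth_directional_derivative_stencil_order5
    {E F : Type*} [NormedAddCommGroup E] [NormedSpace ℝ E] [CompleteSpace E]
    [NormedAddCommGroup F] [NormedSpace ℝ F] [CompleteSpace F]
    (f : E → F) (x₀ v : E)
    (hf : ContDiffAt ℝ 5 f x₀)
    (fnl : E → F) (hfnl : ∀ a, fnl a = f (x₀ + a) - f x₀ - fderiv ℝ f x₀ a) :
    (fun ε : ℝ =>
        (192 : ℝ) • fnl ((ε / 2) • v) - (96 : ℝ) • fnl (ε • v)
          + (64 / 3 : ℝ) • fnl ((3 * ε / 2) • v)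
          - ε ^ 4 • iteratedFDeriv ℝ 4 f x₀ ![v, v, v, v])
      =O[𝓝 (0 : ℝ)] fun ε => ε ^ 5 :=
  fourth_directional_derivative_stencil_order5_general f x₀ v hf fnl hfnl
end
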